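/- For all N, t > 0, ∫_0^N ∫_0^N p_t(x₁ - x₂) dx₁ dx₂ = (N/π) ∫_ℝ φ(z) · exp(-t z²/(2N²)) dz, where φ(z) = (1 - cos z)/z². -/

import Mathlib

open Real MeasureTheory Set intervalIntegral Filter

noncomputable def heatK (t x : ℝ) : ℝ := (2 * π * t) ^ (-(1:ℝ)/2) * Real.exp (-x^2 / (2*t))

noncomputable def φ (z : ℝ) : ℝ := if z = 0 then 1/2 else (1 - Real.cos z) / z ^ 2

lemma gauss_cos {a : ℝ} (ha : 0 < a) (b : ℝ) :
    ∫ z : ℝ, Real.cos (b * z) * Real.exp (-(a * z ^ 2))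
      = Real.sqrt (π / a) * Real.exp (-b ^ 2 / (4 * a)) := by
  have hint : Integrable (fun x : ℝ => Complex.exp (Complex.I * b * x) * Complex.exp (-(a:ℂ) * x ^ 2)) := by
    have h := integrable_cexp_quadratic (b := (a:ℂ)) (by simpa using ha) (Complex.I * b) 0
    refine h.congr (Filter.Eventually.of_forall fun x => ?_)
    show Complex.exp _ = Complex.exp _ * Complex.exp _
    rw [← Complex.exp_add]; congr 1; ring
  have key := fourierIntegral_gaussian (b := (a:ℂ)) (by simpa using ha) ((b:ℝ) : ℂ)
  have hre : ∀ x : ℝ, (Complex.exp (Complex.I * b * x) * Complex.exp (-(a:ℂ) * x ^ 2)).re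
      = Real.cos (b * x) * Real.exp (-(a * x ^ 2)) := by
    intro x
    simp [Complex.mul_re, Complex.mul_im, Complex.exp_re, Complex.exp_im, ← Complex.ofReal_pow]
  calc ∫ z : ℝ, Real.cos (b * z) * Real.exp (-(a * z ^ 2))
      = ∫ z : ℝ, (Complex.exp (Complex.I * b * z) * Complex.exp (-(a:ℂ) * z ^ 2)).re := by
        simp_rw [hre]
    _ = (∫ z : ℝ, Complex.exp (Complex.I * b * z) * Complex.exp (-(a:ℂ) * z ^ 2)).re :=
        integral_re hint
    _ = Real.sqrt (π / a) * Real.exp (-b ^ 2 / (4 * a)) := by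
        rw [key]
        have h3 : ((π : ℂ) / a) ^ (1 / 2 : ℂ) = ((Real.sqrt (π / a) : ℝ) : ℂ) := by
          rw [Real.sqrt_eq_rpow, Complex.ofReal_cpow (by positivity)]
          push_cast; ring_nf
        rw [h3, show (-((b:ℝ):ℂ) ^ 2 / (4 * (a:ℂ))) = ((-b ^ 2 / (4 * a) : ℝ) : ℂ) by push_cast; ring,
          ← Complex.ofReal_exp, ← Complex.ofReal_mul, Complex.ofReal_re]

lemma cos_sq {c : ℝ} (hc : c ≠ 0) (N : ℝ) :
    (∫ x₁ in (0:ℝ)..N, ∫ x₂ in (0:ℝ)..N, Real.cos (c * (x₁ - x₂)))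
      = 2 * (1 - Real.cos (c * N)) / c ^ 2 := by
  have hnc : -c ≠ 0 := neg_ne_zero.2 hc
  have inner : ∀ x₁ : ℝ, (∫ x₂ in (0:ℝ)..N, Real.cos (c * (x₁ - x₂)))
      = (-c)⁻¹ * (Real.sin (-c * N + c * x₁) - Real.sin (-c * 0 + c * x₁)) := by
    intro x₁
    have h : ∀ x₂ : ℝ, c * (x₁ - x₂) = -c * x₂ + c * x₁ := fun _ => by ring
    simp_rw [h]
    rw [intervalIntegral.integral_comp_mul_add Real.cos hnc (c * x₁), integral_cos,
      smul_eq_mul]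
  simp_rw [inner]
  rw [intervalIntegral.integral_const_mul]
  have h1 : ∀ x₁ : ℝ, Real.sin (-c * N + c * x₁) = Real.sin (c * x₁ + (-c * N)) :=
    fun _ => by ring_nf
  have h2 : ∀ x₁ : ℝ, Real.sin (-c * 0 + c * x₁) = Real.sin (c * x₁ + 0) :=
    fun _ => by ring_nf
  simp_rw [h1, h2]
  rw [intervalIntegral.integral_sub
      ((by continuity : Continuous fun x : ℝ => Real.sin (c * x + -c * N)).intervalIntegrable _ _)
      ((by continuity : Continuous fun x : ℝ => Real.sin (c * x + 0)).intervalIntegrable _ _),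
    intervalIntegral.integral_comp_mul_add Real.sin hc (-c * N),
    intervalIntegral.integral_comp_mul_add Real.sin hc 0, integral_sin, integral_sin,
    smul_eq_mul, smul_eq_mul]
  rw [show c * 0 + -c * N = -(c * N) by ring, show c * N + -c * N = (0:ℝ) by ring,
    show c * 0 + 0 = (0:ℝ) by ring, show c * N + 0 = c * N by ring, Real.cos_neg,
    Real.cos_zero]
  field_simp
  ring

theorem stmt_5 (N t : ℝ) (hN : 0 < N) (ht : 0 < t) :
    (∫ x₁ in (0:ℝ)..N, ∫ x₂ in (0:ℝ)..N, heatK t (x₁ - x₂))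
      = (N / π) * ∫ z : ℝ, φ z * Real.exp (-t * z ^ 2 / (2 * N ^ 2)) := by
  have hπ := Real.pi_pos
  set a : ℝ := t / (2 * N ^ 2) with ha_def
  have ha : 0 < a := by positivity
  set μN : Measure ℝ := volume.restrict (Ioc (0:ℝ) N) with hμN
  haveI : IsFiniteMeasure μN := ⟨by
    rw [hμN, Measure.restrict_apply_univ, Real.volume_Ioc]
    exact ENNReal.ofReal_lt_top⟩
  set ν : Measure (ℝ × ℝ) := μN.prod μN with hν
  set F : ℝ → ℝ × ℝ → ℝ :=
    fun z p => Real.cos ((p.1 - p.2) / N * z) * Real.exp (-(a * z ^ 2)) with hF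
  -- Claim A
  have hA : ∀ z : ℝ, (∫ p, F z p ∂ν) = (2 * N ^ 2 * φ z) * Real.exp (-(a * z ^ 2)) := by
    intro z
    have hcont : Continuous fun p : ℝ × ℝ => Real.cos ((p.1 - p.2) / N * z) := by fun_prop
    have hint : Integrable (fun p : ℝ × ℝ => Real.cos ((p.1 - p.2) / N * z)) ν := by
      refine Integrable.mono' (integrable_const 1) hcont.aestronglyMeasurable
        (ae_of_all _ fun p => ?_)
      simpa using Real.abs_cos_le_one _
    have h0 : (∫ p, F z p ∂ν)
        = (∫ p, Real.cos ((p.1 - p.2) / N * z) ∂ν) * Real.exp (-(a * z ^ 2)) := by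
      rw [hF, MeasureTheory.integral_mul_const]
    rw [h0, integral_prod _ hint]
    have hiv : (∫ x, ∫ y, Real.cos (((x, y).1 - (x, y).2) / N * z) ∂μN ∂μN)
        = ∫ x₁ in (0:ℝ)..N, ∫ x₂ in (0:ℝ)..N, Real.cos (z / N * (x₁ - x₂)) := by
      simp_rw [show ∀ x y : ℝ, ((x, y).1 - (x, y).2) / N * z = z / N * (x - y) from
        fun x y => by show (x - y) / N * z = z / N * (x - y); ring]
      simp_rw [intervalIntegral.integral_of_le hN.le]
      rfl
    rw [hiv]
    by_cases hz : z = 0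
    · subst hz
      simp [φ]
      ring
    · rw [cos_sq (div_ne_zero hz hN.ne') N]
      rw [show z / N * N = z by field_simp]
      rw [φ, if_neg hz]
      field_simp
  -- Claim B: integrability for Fubini
  have hB : Integrable (Function.uncurry F) (volume.prod ν) := by
    have hcont : Continuous (Function.uncurry F) := by
      have : Function.uncurry F = fun q : ℝ × (ℝ × ℝ) =>
          Real.cos ((q.2.1 - q.2.2) / N * q.1) * Real.exp (-(a * q.1 ^ 2)) := rfl
      rw [this]; fun_prop
    have hf1 : Integrable (fun x : ℝ => Real.exp (-(a * x ^ 2))) := by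
      simpa [neg_mul] using integrable_exp_neg_mul_sq ha
    have hg : Integrable (fun q : ℝ × (ℝ × ℝ) => Real.exp (-(a * q.1 ^ 2)) * (1:ℝ))
        (volume.prod ν) :=
      hf1.mul_prod (integrable_const 1)
    refine Integrable.mono' hg hcont.aestronglyMeasurable (ae_of_all _ fun q => ?_)
    simp only [hF, Function.uncurry, norm_mul, Real.norm_eq_abs, Real.abs_exp, mul_one]
    exact mul_le_of_le_one_left (Real.exp_nonneg _) (Real.abs_cos_le_one _)
  -- inner Gaussian integral
  have hinner : ∀ p : ℝ × ℝ,
      (∫ z : ℝ, F z p) = Real.sqrt (π / a) * Real.exp (-(p.1 - p.2) ^ 2 / (2 * t)) := by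
    intro p
    have hg := gauss_cos ha ((p.1 - p.2) / N)
    rw [hF]
    rw [hg, show -((p.1 - p.2) / N) ^ 2 / (4 * a) = -(p.1 - p.2) ^ 2 / (2 * t) by
      rw [ha_def]; field_simp; ring]
  set S : ℝ := ∫ p, Real.exp (-(p.1 - p.2) ^ 2 / (2 * t)) ∂ν with hS
  have hRHS : (∫ z : ℝ, φ z * Real.exp (-t * z ^ 2 / (2 * N ^ 2)))
      = (2 * N ^ 2)⁻¹ * (Real.sqrt (π / a) * S) := by
    have step1 : (∫ z : ℝ, φ z * Real.exp (-t * z ^ 2 / (2 * N ^ 2)))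
        = ∫ z : ℝ, (2 * N ^ 2)⁻¹ * ∫ p, F z p ∂ν := by
      congr 1
      funext z
      rw [hA z, show -t * z ^ 2 / (2 * N ^ 2) = -(a * z ^ 2) by rw [ha_def]; ring]
      field_simp
    rw [step1, MeasureTheory.integral_const_mul, integral_integral_swap hB]
    congr 1
    simp_rw [hinner]
    rw [MeasureTheory.integral_const_mul]
  have hexp_int : Integrable (fun p : ℝ × ℝ => Real.exp (-(p.1 - p.2) ^ 2 / (2 * t))) ν := by
    refine Integrable.mono' (integrable_const 1)
      (Continuous.aestronglyMeasurable (by fun_prop)) (ae_of_all _ fun p => ?_)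
    rw [Real.norm_eq_abs, Real.abs_exp]
    refine Real.exp_le_one_iff.2 ?_
    rw [neg_div]
    exact neg_nonpos.2 (by positivity)
  have hLHS : (∫ x₁ in (0:ℝ)..N, ∫ x₂ in (0:ℝ)..N, heatK t (x₁ - x₂))
      = (2 * π * t) ^ (-(1:ℝ)/2) * S := by
    have h1 : ∀ x₁ : ℝ, (∫ x₂ in (0:ℝ)..N, heatK t (x₁ - x₂))
        = (2 * π * t) ^ (-(1:ℝ)/2) * ∫ x₂ in (0:ℝ)..N, Real.exp (-(x₁ - x₂) ^ 2 / (2 * t)) := by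
      intro x₁
      simp_rw [heatK]
      rw [intervalIntegral.integral_const_mul]
    simp_rw [h1]
    rw [intervalIntegral.integral_const_mul]
    congr 1
    rw [hS, integral_prod _ hexp_int]
    simp_rw [intervalIntegral.integral_of_le hN.le]
    rfl
  have hK : (2 * π * t) ^ (-(1:ℝ)/2) = (Real.sqrt (2 * π * t))⁻¹ := by
    rw [show (-(1:ℝ)/2) = -(1/2:ℝ) by norm_num, Real.rpow_neg (by positivity),
      ← Real.sqrt_eq_rpow]
  have hsqrt : Real.sqrt (π / a) = 2 * π * N / Real.sqrt (2 * π * t) := by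
    have h2 : π / a = (2 * π * N / Real.sqrt (2 * π * t)) ^ 2 := by
      rw [div_pow, Real.sq_sqrt (by positivity)]
      rw [ha_def]; field_simp
    rw [h2, Real.sqrt_sq (by positivity)]
  have hst : Real.sqrt (2 * π * t) ≠ 0 := ne_of_gt (Real.sqrt_pos.2 (by positivity))
  rw [hLHS, hRHS, hK, hsqrt]
  field_simp
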